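/- Let φ be a Bernstein function such that λ ↦ λ/φ(λ) is also a Bernstein function (i.e. φ is a special Bernstein function). Then the functions λ ↦ λ²·φ'(λ) and λ ↦ λ²·φ'(λ)/φ(λ)² are nondecreasing on (0,∞). -/

import Mathlib

/-!
For a Bernstein function `f(λ) = bλ + ∫ (1 - e^{-λx}) μ(dx)` one has
`f(λ) - λ f'(λ) = ∫ (1 - (1 + λx) e^{-λx}) μ(dx)`, and `u ↦ 1 - (1 + u) e^{-u}` is nonnegative
and nondecreasing on `[0, ∞)`; so `f - λ f'` is nonnegative and nondecreasing.
With `ψ(λ) = λ / φ(λ)` the quotient rule gives `ψ - λ ψ' = λ² φ' / φ²`, which is the second claim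
for the Bernstein function `ψ`. The first follows since `λ² φ' = φ² · (ψ - λ ψ')` is a product of
nonnegative nondecreasing functions.
-/

open MeasureTheory Set

/-- A Bernstein function: a positive function on `(0,∞)` of the form
`φ(λ) = bλ + ∫_{(0,∞)} (1 - e^{-λx}) μ(dx)` with `b ≥ 0` and `∫ (1 ∧ x) μ(dx) < ∞`. -/
def IsBernstein (φ : ℝ → ℝ) : Prop :=
  (∀ l, 0 < l → 0 < φ l) ∧
  ∃ (b : ℝ) (μ : Measure ℝ), 0 ≤ b ∧
    (∫⁻ x in Ioi (0:ℝ), ENNReal.ofReal (min 1 x) ∂μ) < ⊤ ∧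
    ∀ l, 0 < l → φ l = b * l + ∫ x in Ioi (0:ℝ), (1 - Real.exp (-(l * x))) ∂μ

section BernsteinRep

open Real

lemma one_sub_exp_neg_mul_le {t x : ℝ} (hx : 0 ≤ x) :
    1 - exp (-(t * x)) ≤ max 1 t * min 1 x := by
  have h1 : 1 - exp (-(t * x)) ≤ 1 := by linarith [exp_pos (-(t * x))]
  have h2 : 1 - exp (-(t * x)) ≤ t * x := by linarith [add_one_le_exp (-(t * x))]
  rcases le_total x 1 with hx1 | hx1
  · rw [min_eq_right hx1]
    nlinarith [le_max_right 1 t]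
  · rw [min_eq_left hx1, mul_one]
    exact h1.trans (le_max_left 1 t)

lemma mul_exp_neg_mul_le {t x : ℝ} (ht : 0 < t) (hx : 0 ≤ x) :
    x * exp (-(t * x)) ≤ max 1 t⁻¹ * min 1 x := by
  have h1 : x * exp (-(t * x)) ≤ x :=
    mul_le_of_le_one_right hx (exp_le_one_iff.2 (by nlinarith))
  have h2 : x * exp (-(t * x)) ≤ t⁻¹ := by
    have key : t * x * exp (-(t * x)) ≤ 1 :=
      (mul_exp_neg_le_exp_neg_one _).trans (exp_le_one_iff.2 (by norm_num))
    rw [← one_div, le_div_iff₀ ht]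
    linarith
  rcases le_total x 1 with hx1 | hx1
  · rw [min_eq_right hx1]
    nlinarith [le_max_left 1 t⁻¹]
  · rw [min_eq_left hx1, mul_one]
    exact h2.trans (le_max_right 1 t⁻¹)

lemma one_add_mul_exp_neg_le {u v : ℝ} (hu : 0 ≤ u) (huv : u ≤ v) :
    (1 + v) * exp (-v) ≤ (1 + u) * exp (-u) := by
  have h : 1 + v ≤ (1 + u) * exp (v - u) := by nlinarith [add_one_le_exp (v - u)]
  calc (1 + v) * exp (-v) ≤ (1 + u) * exp (v - u) * exp (-v) :=
        mul_le_mul_of_nonneg_right h (exp_pos _).le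
    _ = (1 + u) * exp (-u) := by rw [mul_assoc, ← exp_add]; ring_nf

variable {b : ℝ} {μ : Measure ℝ}

noncomputable def bernsteinRep (b : ℝ) (μ : Measure ℝ) (l : ℝ) : ℝ :=
  b * l + ∫ x in Ioi (0:ℝ), (1 - exp (-(l * x))) ∂μ

noncomputable def bernsteinRepDeriv (b : ℝ) (μ : Measure ℝ) (l : ℝ) : ℝ :=
  b + ∫ x in Ioi (0:ℝ), x * exp (-(l * x)) ∂μ

lemma integrable_min_one_of_lintegral_lt_top
    (hμ : (∫⁻ x in Ioi (0:ℝ), ENNReal.ofReal (min 1 x) ∂μ) < ⊤) :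
    Integrable (fun x => min 1 x) (μ.restrict (Ioi 0)) := by
  refine ⟨(continuous_const.min continuous_id).aestronglyMeasurable, ?_⟩
  rw [hasFiniteIntegral_iff_ofReal]
  · exact hμ
  · exact (ae_restrict_iff' measurableSet_Ioi).2
      (ae_of_all _ fun x (hx : 0 < x) => le_min zero_le_one hx.le)

lemma integrable_of_le_mul_min_one (hμ : Integrable (fun x => min 1 x) (μ.restrict (Ioi 0)))
    {f : ℝ → ℝ} (hf : Continuous f) {C : ℝ} (hle : ∀ x, 0 < x → ‖f x‖ ≤ C * min 1 x) :
    Integrable f (μ.restrict (Ioi 0)) :=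
  (hμ.const_mul C).mono' hf.aestronglyMeasurable
    ((ae_restrict_iff' measurableSet_Ioi).2 (ae_of_all _ hle))

lemma integrable_one_sub_exp_neg_mul (hμ : Integrable (fun x => min 1 x) (μ.restrict (Ioi 0)))
    {l : ℝ} (hl : 0 < l) :
    Integrable (fun x => 1 - exp (-(l * x))) (μ.restrict (Ioi 0)) := by
  refine integrable_of_le_mul_min_one hμ (C := max 1 l) (by fun_prop) fun x hx => ?_
  have h0 : 0 ≤ 1 - exp (-(l * x)) := by
    linarith [exp_le_one_iff.2 (by nlinarith : -(l * x) ≤ 0)]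
  rw [Real.norm_eq_abs, abs_of_nonneg h0]
  exact one_sub_exp_neg_mul_le hx.le

lemma integrable_mul_exp_neg_mul (hμ : Integrable (fun x => min 1 x) (μ.restrict (Ioi 0)))
    {l : ℝ} (hl : 0 < l) :
    Integrable (fun x => x * exp (-(l * x))) (μ.restrict (Ioi 0)) := by
  refine integrable_of_le_mul_min_one hμ (C := max 1 l⁻¹) (by fun_prop) fun x hx => ?_
  rw [Real.norm_eq_abs, abs_of_nonneg (by positivity)]
  exact mul_exp_neg_mul_le hl hx.le

lemma hasDerivAt_bernsteinRep (hμ : Integrable (fun x => min 1 x) (μ.restrict (Ioi 0)))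
    {l : ℝ} (hl : 0 < l) : HasDerivAt (bernsteinRep b μ) (bernsteinRepDeriv b μ l) l := by
  have hF := hasDerivAt_integral_of_dominated_loc_of_deriv_le
    (F := fun t x => 1 - exp (-(t * x))) (F' := fun t x => x * exp (-(t * x)))
    (bound := fun x => max 1 (l / 2)⁻¹ * min 1 x)
    (Metric.ball_mem_nhds l (half_pos hl))
    (Filter.Eventually.of_forall fun t => (by fun_prop : Continuous _).aestronglyMeasurable)
    (integrable_one_sub_exp_neg_mul hμ hl)
    (by fun_prop : Continuous fun x => x * exp (-(l * x))).aestronglyMeasurable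
    ((ae_restrict_iff' measurableSet_Ioi).2 (ae_of_all _ fun x (hx : 0 < x) t ht => ?_))
    (hμ.const_mul _)
    (ae_of_all _ fun x t _ => ?_)
  · exact ((hasDerivAt_id l).const_mul b).add hF.2 |>.congr_deriv (by simp [bernsteinRepDeriv])
  · have ht : l / 2 ≤ t := by
      linarith [(abs_lt.1 (mem_ball_iff_norm.1 ht)).1]
    rw [Real.norm_eq_abs, abs_of_nonneg (by positivity)]
    calc x * exp (-(t * x)) ≤ x * exp (-(l / 2 * x)) := by gcongr
      _ ≤ _ := mul_exp_neg_mul_le (half_pos hl) hx.le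
  · simpa [mul_comm] using ((((hasDerivAt_id t).mul_const x).neg).exp).const_sub 1

lemma one_sub_one_add_mul_exp_neg_mul (l : ℝ) :
    (fun x => 1 - (1 + l * x) * exp (-(l * x)))
      = (fun x => 1 - exp (-(l * x))) - fun x => l * (x * exp (-(l * x))) := by
  ext x; simp only [Pi.sub_apply]; ring

lemma integrable_one_sub_one_add_mul_exp_neg_mul
    (hμ : Integrable (fun x => min 1 x) (μ.restrict (Ioi 0))) {l : ℝ} (hl : 0 < l) :
    Integrable (fun x => 1 - (1 + l * x) * exp (-(l * x))) (μ.restrict (Ioi 0)) := by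
  rw [one_sub_one_add_mul_exp_neg_mul]
  exact (integrable_one_sub_exp_neg_mul hμ hl).sub ((integrable_mul_exp_neg_mul hμ hl).const_mul l)

lemma bernsteinRep_sub_mul_deriv (hμ : Integrable (fun x => min 1 x) (μ.restrict (Ioi 0)))
    {l : ℝ} (hl : 0 < l) :
    bernsteinRep b μ l - l * bernsteinRepDeriv b μ l
      = ∫ x in Ioi (0:ℝ), (1 - (1 + l * x) * exp (-(l * x))) ∂μ := by
  rw [one_sub_one_add_mul_exp_neg_mul, integral_sub' (integrable_one_sub_exp_neg_mul hμ hl)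
    ((integrable_mul_exp_neg_mul hμ hl).const_mul l), integral_const_mul, bernsteinRep,
    bernsteinRepDeriv]
  ring

lemma bernsteinRep_sub_mul_deriv_nonneg
    (hμ : Integrable (fun x => min 1 x) (μ.restrict (Ioi 0))) {l : ℝ} (hl : 0 < l) :
    0 ≤ bernsteinRep b μ l - l * bernsteinRepDeriv b μ l := by
  rw [bernsteinRep_sub_mul_deriv hμ hl]
  refine setIntegral_nonneg measurableSet_Ioi fun x (hx : 0 < x) => ?_
  have := one_add_mul_exp_neg_le le_rfl (by positivity : 0 ≤ l * x)
  simp only [add_zero, neg_zero, exp_zero, mul_one] at this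
  linarith

lemma monotoneOn_bernsteinRep_sub_mul_deriv
    (hμ : Integrable (fun x => min 1 x) (μ.restrict (Ioi 0))) :
    MonotoneOn (fun l => bernsteinRep b μ l - l * bernsteinRepDeriv b μ l) (Ioi 0) := by
  intro a (ha : 0 < a) c (hc : 0 < c) hac
  simp only [bernsteinRep_sub_mul_deriv hμ ha, bernsteinRep_sub_mul_deriv hμ hc]
  refine setIntegral_mono_on (integrable_one_sub_one_add_mul_exp_neg_mul hμ ha)
    (integrable_one_sub_one_add_mul_exp_neg_mul hμ hc) measurableSet_Ioi fun x (hx : 0 < x) => ?_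
  have := one_add_mul_exp_neg_le (by positivity : 0 ≤ a * x) (by gcongr : a * x ≤ c * x)
  linarith

lemma monotoneOn_bernsteinRep (hb : 0 ≤ b)
    (hμ : Integrable (fun x => min 1 x) (μ.restrict (Ioi 0))) :
    MonotoneOn (bernsteinRep b μ) (Ioi 0) := by
  intro a (ha : 0 < a) c (hc : 0 < c) hac
  refine add_le_add (by gcongr) (setIntegral_mono_on (integrable_one_sub_exp_neg_mul hμ ha)
    (integrable_one_sub_exp_neg_mul hμ hc) measurableSet_Ioi fun x (hx : 0 < x) => ?_)
  gcongr

end BernsteinRep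

namespace IsBernstein

variable {φ : ℝ → ℝ}

lemma pos (h : IsBernstein φ) {l : ℝ} (hl : 0 < l) : 0 < φ l := h.1 l hl

lemma exists_bernsteinRep (h : IsBernstein φ) :
    ∃ b μ, 0 ≤ b ∧ Integrable (fun x => min 1 x) (μ.restrict (Ioi 0)) ∧
      EqOn φ (bernsteinRep b μ) (Ioi 0) :=
  let ⟨_, b, μ, hb, hμ, hφ⟩ := h
  ⟨b, μ, hb, integrable_min_one_of_lintegral_lt_top hμ, fun l hl => hφ l hl⟩

lemma exists_hasDerivAt (h : IsBernstein φ) :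
    ∃ b μ, Integrable (fun x => min 1 x) (μ.restrict (Ioi 0)) ∧
      EqOn φ (bernsteinRep b μ) (Ioi 0) ∧
      ∀ l, 0 < l → HasDerivAt φ (bernsteinRepDeriv b μ l) l := by
  obtain ⟨b, μ, -, hμ, hφ⟩ := h.exists_bernsteinRep
  refine ⟨b, μ, hμ, hφ, fun l hl => ?_⟩
  exact (hasDerivAt_bernsteinRep hμ hl).congr_of_eventuallyEq
    (Filter.eventuallyEq_of_mem (Ioi_mem_nhds hl) hφ)

lemma monotoneOn (h : IsBernstein φ) : MonotoneOn φ (Ioi 0) := by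
  obtain ⟨b, μ, hb, hμ, hφ⟩ := h.exists_bernsteinRep
  exact (monotoneOn_bernsteinRep hb hμ).congr hφ.symm

lemma differentiableAt (h : IsBernstein φ) {l : ℝ} (hl : 0 < l) : DifferentiableAt ℝ φ l :=
  let ⟨_, _, _, _, hd⟩ := h.exists_hasDerivAt
  (hd l hl).differentiableAt

lemma sub_mul_deriv_nonneg (h : IsBernstein φ) {l : ℝ} (hl : 0 < l) :
    0 ≤ φ l - l * deriv φ l := by
  obtain ⟨b, μ, hμ, hφ, hd⟩ := h.exists_hasDerivAt
  rw [hφ hl, (hd l hl).deriv]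
  exact bernsteinRep_sub_mul_deriv_nonneg hμ hl

lemma monotoneOn_sub_mul_deriv (h : IsBernstein φ) :
    MonotoneOn (fun l => φ l - l * deriv φ l) (Ioi 0) := by
  obtain ⟨b, μ, hμ, hφ, hd⟩ := h.exists_hasDerivAt
  refine (monotoneOn_bernsteinRep_sub_mul_deriv (b := b) hμ).congr fun l (hl : 0 < l) => ?_
  rw [hφ hl, (hd l hl).deriv]

end IsBernstein

lemma sub_mul_deriv_div_self {φ : ℝ → ℝ} {l : ℝ} (hd : DifferentiableAt ℝ φ l) (h0 : φ l ≠ 0) :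
    l / φ l - l * deriv (fun t => t / φ t) l = l ^ 2 * deriv φ l / φ l ^ 2 := by
  rw [((hasDerivAt_id' l).fun_div hd.hasDerivAt h0).deriv]
  field_simp
  ring

theorem stmt1 (φ : ℝ → ℝ) (hφ : IsBernstein φ)
    (hspec : IsBernstein (fun l => l / φ l)) :
    MonotoneOn (fun l => l ^ 2 * deriv φ l) (Ioi (0:ℝ)) ∧
    MonotoneOn (fun l => l ^ 2 * deriv φ l / (φ l) ^ 2) (Ioi (0:ℝ)) := by
  have hgap : EqOn (fun l => l / φ l - l * deriv (fun t => t / φ t) l)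
      (fun l => l ^ 2 * deriv φ l / φ l ^ 2) (Ioi 0) := fun l hl =>
    sub_mul_deriv_div_self (hφ.differentiableAt hl) (hφ.pos hl).ne'
  have hquot : MonotoneOn (fun l => l ^ 2 * deriv φ l / φ l ^ 2) (Ioi 0) :=
    hspec.monotoneOn_sub_mul_deriv.congr hgap
  have hsq : MonotoneOn (fun l => φ l ^ 2) (Ioi 0) := fun a ha c hc hac =>
    pow_le_pow_left₀ (hφ.pos ha).le (hφ.monotoneOn ha hc hac) 2
  refine ⟨(hsq.mul hquot (fun l hl => by positivity) fun l hl => ?_).congr fun l hl => ?_, hquot⟩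
  · exact (hspec.sub_mul_deriv_nonneg hl).trans_eq (hgap hl)
  · have := (hφ.pos hl).ne'
    simp only [Pi.mul_apply]
    field_simp
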